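/- arXiv:2104.03781 — 2 statements merged into one kernel-verified Lean document; each statement's English description precedes it below -/
import Mathlib

section
/- For any finite context set X = {x_1,...,x_N} with a probability distribution ρ supported on at least d contexts, reward function μ with μ*(x_1) ≠ 0, there exists a d-dimensional realizable linear representation φ (i.e., μ(x,a) = φ(x,a)ᵀθ* for some θ* ∈ ℝ^d) such that λ_min(E_{x∼ρ}[φ*(x)φ*(x)ᵀ]) > 0 (the HLS condition). -/
open Matrix

/-!
Take as features the reward itself in the first coordinate and, in coordinate `j ≠ 0`, the
indicator of the context `xs j`; the reward is then read off with `θ = e₀`. Evaluated at the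
optimal actions of `xs 0, …, xs (d-1)`, these features form a lower triangular matrix with
diagonal `(μ*(xs 0), 1, …, 1)`, which is invertible. Every nonzero `z` is therefore detected by
some `φ*(xs i) ⬝ᵥ z ≠ 0`, and as `ρ (xs i) > 0` the quadratic form
`∑ₓ ρ x (φ*(x) ⬝ᵥ z)²` of the design matrix is positive.
-/

namespace Matrix

variable {ι n : Type*} [Fintype ι] [Fintype n]

theorem dotProduct_sum_smul_vecMulVec_mulVec {R : Type*} [CommRing R] (ρ : ι → R)
    (v : ι → n → R) (z : n → R) :
    z ⬝ᵥ ((∑ x, ρ x • vecMulVec (v x) (v x)) *ᵥ z) =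
      ∑ x, ρ x * (v x ⬝ᵥ z) ^ 2 := by
  simp only [sum_mulVec, smul_mulVec, vecMulVec_mulVec, dotProduct_sum, dotProduct_smul]
  refine Finset.sum_congr rfl fun x _ => ?_
  simp [dotProduct_comm z (v x), smul_eq_mul, sq]

theorem posDef_sum_smul_vecMulVec {ρ : ι → ℝ} (hρ : ∀ x, 0 ≤ ρ x) {v : ι → n → ℝ}
    (hdetect : ∀ z ≠ 0, ∃ x, 0 < ρ x ∧ v x ⬝ᵥ z ≠ 0) :
    (∑ x, ρ x • vecMulVec (v x) (v x)).PosDef := by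
  have hpsd : (∑ x, ρ x • vecMulVec (v x) (v x)).PosSemidef :=
    posSemidef_sum _ fun x _ => (posSemidef_vecMulVec_self_star (v x)).smul (hρ x)
  refine posDef_iff_dotProduct_mulVec.mpr ⟨hpsd.isHermitian, fun z hz => ?_⟩
  obtain ⟨x₀, hρx₀, hvx₀⟩ := hdetect z hz
  rw [star_trivial, dotProduct_sum_smul_vecMulVec_mulVec]
  exact Finset.sum_pos' (fun x _ => mul_nonneg (hρ x) (sq_nonneg _))
    ⟨x₀, Finset.mem_univ _, mul_pos hρx₀ (by positivity)⟩

theorem posDef_sum_smul_vecMulVec_of_det_ne_zero [DecidableEq n] {ρ : ι → ℝ}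
    (hρ : ∀ x, 0 ≤ ρ x) {v : ι → n → ℝ} {xs : n → ι} (hsupp : ∀ i, 0 < ρ (xs i))
    (hdet : (of fun i => v (xs i)).det ≠ 0) :
    (∑ x, ρ x • vecMulVec (v x) (v x)).PosDef := by
  refine posDef_sum_smul_vecMulVec hρ fun z hz => ?_
  have hmulVec : (of fun i => v (xs i)) *ᵥ z ≠ 0 := fun h =>
    hz (eq_zero_of_mulVec_eq_zero hdet h)
  obtain ⟨i, hi⟩ := Function.ne_iff.mp hmulVec
  exact ⟨xs i, hsupp i, hi⟩

end Matrix

section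

variable {X Act : Type*} [DecidableEq X] {d : ℕ} [NeZero d]

def rewardIndicatorFeatures (μ : X → Act → ℝ) (xs : Fin d → X) (x : X) (a : Act) :
    Fin d → ℝ :=
  fun j => if j = 0 then μ x a else if x = xs j then 1 else 0

theorem rewardIndicatorFeatures_dotProduct_single (μ : X → Act → ℝ) (xs : Fin d → X)
    (x : X) (a : Act) : rewardIndicatorFeatures μ xs x a ⬝ᵥ Pi.single 0 1 = μ x a := by
  simp [rewardIndicatorFeatures, dotProduct_single]

theorem det_rewardIndicatorFeatures (μ : X → Act → ℝ) {xs : Fin d → X}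
    (hxs : Function.Injective xs) (a : X → Act) :
    (of fun i => rewardIndicatorFeatures μ xs (xs i) (a (xs i))).det = μ (xs 0) (a (xs 0)) := by
  have hlower :
      (of fun i => rewardIndicatorFeatures μ xs (xs i) (a (xs i))).IsLowerTriangular := by
    intro i j (hij : i < j)
    have hj : j ≠ 0 := ((Fin.zero_le i).trans_lt hij).ne'
    simp [rewardIndicatorFeatures, hj, hxs.ne hij.ne]
  rw [det_of_isLowerTriangular _ hlower]
  simp [rewardIndicatorFeatures]

end

theorem stmt10_general {d : ℕ} (hd : 0 < d) {X Act : Type*} [Fintype X]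
    (ρ : X → ℝ) (hρ0 : ∀ x, 0 ≤ ρ x)
    (μ : X → Act → ℝ) (astar : X → Act)
    (xs : Fin d → X) (hinj : Function.Injective xs) (hsupp : ∀ i, 0 < ρ (xs i))
    (hne : μ (xs ⟨0, hd⟩) (astar (xs ⟨0, hd⟩)) ≠ 0) :
    ∃ (φ : X → Act → (Fin d → ℝ)) (θ : Fin d → ℝ),
      (∀ x a, μ x a = φ x a ⬝ᵥ θ) ∧
      (∑ x, ρ x • Matrix.vecMulVec (φ x (astar x)) (φ x (astar x))).PosDef := by
  classical
  have : NeZero d := ⟨hd.ne'⟩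
  refine ⟨rewardIndicatorFeatures μ xs, Pi.single 0 1,
    fun x a => (rewardIndicatorFeatures_dotProduct_single μ xs x a).symm, ?_⟩
  exact posDef_sum_smul_vecMulVec_of_det_ne_zero hρ0 hsupp
    ((det_rewardIndicatorFeatures μ hinj astar).trans_ne hne)

/-- Existence of a `d`-dimensional realizable HLS representation for any finite contextual
problem with at least `d` supported contexts and nonzero optimal reward at the first. -/
theorem stmt10 {d : ℕ} (hd : 0 < d) {X Act : Type*} [Fintype X] [Fintype Act]
    (ρ : X → ℝ) (hρ0 : ∀ x, 0 ≤ ρ x) (hρ1 : ∑ x, ρ x = 1)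
    (μ : X → Act → ℝ) (astar : X → Act) (hopt : ∀ x a, μ x a ≤ μ x (astar x))
    (xs : Fin d → X) (hinj : Function.Injective xs) (hsupp : ∀ i, 0 < ρ (xs i))
    (hne : μ (xs ⟨0, hd⟩) (astar (xs ⟨0, hd⟩)) ≠ 0) :
    ∃ (φ : X → Act → (Fin d → ℝ)) (θ : Fin d → ℝ),
      (∀ x a, μ x a = φ x a ⬝ᵥ θ) ∧
      (∑ x, ρ x • Matrix.vecMulVec (φ x (astar x)) (φ x (astar x))).PosDef :=
  stmt10_general hd ρ hρ0 μ astar xs hinj hsupp hne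
end

section
/- Let a, b > 0 with a/b < e⁻¹. Then any t ≥ (1 + √(2u) + u)/a with u = ln(b/a) + 1 satisfies a·t ≥ log(b·t). -/
/-- Explicit sufficient condition, via the Lambert `W` function bounds, for `a t ≥ log (b t)`. -/
theorem stmt16 (a b : ℝ) (ha : 0 < a) (hb : 0 < b) (hab : a / b < Real.exp (-1))
    (t : ℝ)
    (ht : (1 + Real.sqrt (2 * (Real.log (b / a) + 1)) + (Real.log (b / a) + 1)) / a ≤ t) :
    Real.log (b * t) ≤ a * t := by
  set u : ℝ := Real.log (b / a) + 1 with hu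
  set v : ℝ := Real.sqrt (2 * u) with hv
  clear_value v u
  -- b/a > 1, so log(b/a) ≥ 0, so u ≥ 1
  have hba : 1 < b / a := by
    have h1 : a < Real.exp (-1) * b := (div_lt_iff₀ hb).mp hab
    have h2 : Real.exp (-1) < 1 := by
      have := Real.exp_lt_one_iff.mpr (by norm_num : (-1:ℝ) < 0)
      exact this
    rw [lt_div_iff₀ ha]
    nlinarith [Real.exp_pos (-1)]
  have hu0 : 0 ≤ u := by
    have := Real.log_nonneg hba.le
    linarith
  have hv0 : 0 ≤ v := hv ▸ Real.sqrt_nonneg _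
  have hv2 : v ^ 2 = 2 * u := hv ▸ Real.sq_sqrt (by linarith)
  -- s := a * t
  have hs : 1 + v + u ≤ a * t := by
    have := (div_le_iff₀ ha).mp ht
    linarith [this]
  have hs0 : (0:ℝ) < 1 + v + u := by linarith
  have ht0 : 0 < t := by
    have : 0 < (1 + v + u) / a := div_pos hs0 ha
    linarith [ht]
  have hat : 0 < a * t := mul_pos ha ht0
  -- log (1 + v + u) ≤ v, since 1 + v + u = 1 + v + v²/2 ≤ exp v
  have hkey : Real.log (1 + v + u) ≤ v := by
    have hq : 1 + v + u ≤ Real.exp v := by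
      have := Real.quadratic_le_exp_of_nonneg hv0
      nlinarith
    calc Real.log (1 + v + u) ≤ Real.log (Real.exp v) :=
          Real.log_le_log hs0 hq
      _ = v := Real.log_exp v
  -- monotonicity step: log (a*t) - log(1+v+u) ≤ a*t - (1+v+u)
  have hmono : Real.log (a * t) ≤ Real.log (1 + v + u) + (a * t - (1 + v + u)) := by
    have hdiv : Real.log (a * t / (1 + v + u)) ≤ a * t / (1 + v + u) - 1 :=
      Real.log_le_sub_one_of_pos (div_pos hat hs0)
    rw [Real.log_div (ne_of_gt hat) (ne_of_gt hs0)] at hdiv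
    have h1 : a * t / (1 + v + u) - 1 ≤ a * t - (1 + v + u) := by
      rw [div_sub_one (ne_of_gt hs0), div_le_iff₀ hs0]
      nlinarith
    linarith
  -- assemble
  have hsplit : Real.log (b * t) = (u - 1) + Real.log (a * t) := by
    have hbt : b * t = (b / a) * (a * t) := by field_simp
    rw [hbt, Real.log_mul (by positivity) (ne_of_gt hat)]
    have : Real.log (b / a) = u - 1 := by rw [hu]; ring
    rw [this]
  rw [hsplit]
  linarith
end
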